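/- Let A, B : [0,1] → ℝ be continuous. Suppose there exist real numbers a and b such that the function t ↦ a·A(t) + b·B(t) is not identically zero on [0,1] and does not change sign on [0,1]. Then the Abel equation x' = A(t)x³ + B(t)x² has at most one periodic orbit with nonzero initial condition; that is, if γ₁ and γ₂ are periodic orbits with γ₁(0) ≠ 0 and γ₂(0) ≠ 0, then γ₁ = γ₂. -/

import Mathlib

/-!
Put `D = a A + b B`, and assume `D ≥ 0` (otherwise replace `(a, b)` by `(-a, -b)`).
Differences of solutions solve linear equations `u' = g u`, so a nonzero solution never vanishes
and two solutions differing at `0` never meet. Along a nonvanishing periodic orbit the function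
`exp (-∫ A γ²) (b γ - a)` is nondecreasing, with derivative `exp (-∫ A γ²) γ² D`; vanishing
somewhere would make it vanish at both ends, hence be constant, forcing `D ≡ 0`. So orbits avoid
the curve `b x = a`. If `Φ' = 1 / (x² (b x - a))`, then `(Φ ∘ γ)' = (A γ + B) / (b γ - a)` for
every solution, and for two periodic orbits `Φ ∘ γ₁ - Φ ∘ γ₂` is periodic with derivative
`(γ₂ - γ₁) / ((b γ₁ - a) (b γ₂ - a)) * D`, a factor of constant sign times `D`. So
`γ₁ 0 ≠ γ₂ 0` would force `D ≡ 0`.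
-/

/-- `γ : ℝ → ℝ` is a solution of the Abel equation `x' = A(t)x³ + B(t)x²` on `[0,1]`. -/
def IsAbelSolution (A B : ℝ → ℝ) (γ : ℝ → ℝ) : Prop :=
  ∀ t ∈ Set.Icc (0:ℝ) 1,
    HasDerivWithinAt γ (A t * γ t ^ 3 + B t * γ t ^ 2) (Set.Icc (0:ℝ) 1) t

/-- A periodic orbit of the Abel equation: a solution on `[0,1]` with `γ 0 = γ 1`. -/
def IsPeriodicOrbit (A B : ℝ → ℝ) (γ : ℝ → ℝ) : Prop :=
  IsAbelSolution A B γ ∧ γ 0 = γ 1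

open Set Real

section Calculus

variable {a b : ℝ}

theorem IsPreconnected.forall_pos_or_forall_neg {X : Type*} [TopologicalSpace X] {s : Set X}
    {f : X → ℝ} (hs : IsPreconnected s) (hf : ContinuousOn f s) (hf0 : ∀ x ∈ s, f x ≠ 0) :
    (∀ x ∈ s, 0 < f x) ∨ ∀ x ∈ s, f x < 0 := by
  by_contra! h
  obtain ⟨⟨u, hu, hfu⟩, v, hv, hfv⟩ := h
  obtain ⟨w, hw, hfw⟩ :=
    (hs.image f hf).Icc_subset (mem_image_of_mem f hu) (mem_image_of_mem f hv) ⟨hfu, hfv⟩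
  exact hf0 w hw hfw

theorem hasDerivWithinAt_integral_Icc {g : ℝ → ℝ} (hg : ContinuousOn g (Icc a b)) {t : ℝ}
    (ht : t ∈ Icc a b) :
    HasDerivWithinAt (fun u => ∫ s in a..u, g s) (g t) (Icc a b) t := by
  have : Fact (t ∈ Icc a b) := ⟨ht⟩
  refine intervalIntegral.integral_hasDerivWithinAt_right ?_
    (hg.stronglyMeasurableAtFilter_nhdsWithin measurableSet_Icc t) (hg t ht)
  exact (hg.mono (by rw [uIcc_of_le ht.1]; exact Icc_subset_Icc_right ht.2)).intervalIntegrable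

theorem monotoneOn_Icc_of_hasDerivWithinAt_nonneg {f f' : ℝ → ℝ}
    (hf : ∀ t ∈ Icc a b, HasDerivWithinAt f (f' t) (Icc a b) t)
    (hf' : ∀ t ∈ Icc a b, 0 ≤ f' t) : MonotoneOn f (Icc a b) :=
  monotoneOn_of_hasDerivWithinAt_nonneg (convex_Icc a b)
    (fun t ht => (hf t ht).continuousWithinAt)
    (fun t ht => by
      rw [interior_Icc] at ht ⊢
      exact (hf t (Ioo_subset_Icc_self ht)).mono Ioo_subset_Icc_self)
    (fun t ht => hf' t (interior_subset ht))

theorem eq_mul_exp_integral_of_hasDerivWithinAt {f g : ℝ → ℝ} (hg : ContinuousOn g (Icc a b))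
    (hf : ∀ t ∈ Icc a b, HasDerivWithinAt f (g t * f t) (Icc a b) t) :
    ∀ t ∈ Icc a b, f t = f a * exp (∫ s in a..t, g s) := by
  have hE : ∀ t ∈ Icc a b, HasDerivWithinAt (fun u => exp (-∫ s in a..u, g s) * f u) 0
      (Icc a b) t := fun t ht =>
    (((hasDerivWithinAt_integral_Icc hg ht).neg.exp).mul (hf t ht)).congr_deriv (by ring)
  have hconst := constant_of_derivWithin_zero
    (fun t ht => (hE t ht).differentiableWithinAt)
    (fun t ht => (hE t (Ico_subset_Icc_self ht)).derivWithin
      (uniqueDiffOn_Icc (ht.1.trans_lt ht.2) t (Ico_subset_Icc_self ht)))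
  intro t ht
  have := hconst t ht
  simp only [intervalIntegral.integral_same, neg_zero, exp_zero, one_mul] at this
  rw [← this, mul_comm, ← mul_assoc, ← exp_add, add_neg_cancel, exp_zero, one_mul]

theorem forall_eq_zero_of_hasDerivWithinAt_pos_mul (hab : a < b) {K ρ D : ℝ → ℝ}
    (hK : ∀ t ∈ Icc a b, HasDerivWithinAt K (ρ t * D t) (Icc a b) t)
    (hρ : ∀ t ∈ Icc a b, 0 < ρ t) (hD : ∀ t ∈ Icc a b, 0 ≤ D t) (hKab : K b ≤ K a) :
    ∀ t ∈ Icc a b, D t = 0 := by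
  have hmono := monotoneOn_Icc_of_hasDerivWithinAt_nonneg hK
    fun t ht => mul_nonneg (hρ t ht).le (hD t ht)
  have hconst : EqOn K (fun _ => K a) (Icc a b) := fun s hs =>
    le_antisymm ((hmono hs (right_mem_Icc.2 hab.le) hs.2).trans hKab)
      (hmono (left_mem_Icc.2 hab.le) hs hs.1)
  intro t ht
  have hzero : ρ t * D t = 0 := (uniqueDiffOn_Icc hab t ht).eq_deriv _ (hK t ht)
    ((hasDerivWithinAt_const t _ (K a)).congr hconst (hconst ht))
  exact (mul_eq_zero.1 hzero).resolve_left (hρ t ht).ne'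

theorem forall_eq_zero_of_hasDerivWithinAt_mul (hab : a < b) {K ρ D : ℝ → ℝ}
    (hK : ∀ t ∈ Icc a b, HasDerivWithinAt K (ρ t * D t) (Icc a b) t)
    (hρ : ContinuousOn ρ (Icc a b)) (hρ0 : ∀ t ∈ Icc a b, ρ t ≠ 0)
    (hD : ∀ t ∈ Icc a b, 0 ≤ D t) (hKab : K a = K b) :
    ∀ t ∈ Icc a b, D t = 0 := by
  rcases isPreconnected_Icc.forall_pos_or_forall_neg hρ hρ0 with hpos | hneg
  · exact forall_eq_zero_of_hasDerivWithinAt_pos_mul hab hK hpos hD hKab.ge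
  · refine forall_eq_zero_of_hasDerivWithinAt_pos_mul hab (K := -K) (ρ := -ρ)
      (fun t ht => ?_) (fun t ht => neg_pos.2 (hneg t ht)) hD (neg_le_neg hKab.le)
    simpa only [Pi.neg_apply, neg_mul] using (hK t ht).neg

end Calculus

theorem exists_hasDerivAt_inv_sq_mul_sub (a b : ℝ) :
    ∃ Φ : ℝ → ℝ, ∀ x, x ≠ 0 → b * x - a ≠ 0 → HasDerivAt Φ (x ^ 2 * (b * x - a))⁻¹ x := by
  rcases eq_or_ne a 0 with rfl | ha
  · refine ⟨fun x => -(2 * b * x ^ 2)⁻¹, fun x hx hbx => ?_⟩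
    have hb : b ≠ 0 := left_ne_zero_of_mul (sub_zero (b * x) ▸ hbx)
    exact (((hasDerivAt_pow 2 x).const_mul (2 * b)).inv (by positivity)).neg.congr_deriv
      (by field_simp; ring)
  · refine ⟨fun x => (a * x)⁻¹ + b / a ^ 2 * log (b - a * x⁻¹), fun x hx hbx => ?_⟩
    have hxb : x * b - a ≠ 0 := by rwa [mul_comm]
    have hlog : b - a * x⁻¹ ≠ 0 := by
      rw [← div_eq_mul_inv, sub_div' hx]; exact div_ne_zero hbx hx
    exact (((hasDerivAt_id' x).const_mul a).inv (mul_ne_zero ha hx)).add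
      ((((hasDerivAt_inv hx).const_mul a).const_sub b).log hlog |>.const_mul (b / a ^ 2))
      |>.congr_deriv (by field_simp; ring)

section Abel

variable {A B γ γ₁ γ₂ : ℝ → ℝ}

theorem IsAbelSolution.continuousOn (h : IsAbelSolution A B γ) : ContinuousOn γ (Icc 0 1) :=
  fun t ht => (h t ht).continuousWithinAt

theorem isAbelSolution_zero : IsAbelSolution A B 0 := fun t _ =>
  (hasDerivWithinAt_const t _ 0).congr_deriv (by simp)

theorem IsAbelSolution.apply_eq_iff (hA : ContinuousOn A (Icc 0 1))
    (hB : ContinuousOn B (Icc 0 1)) (h₁ : IsAbelSolution A B γ₁) (h₂ : IsAbelSolution A B γ₂)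
    {t : ℝ} (ht : t ∈ Icc (0:ℝ) 1) : γ₁ t = γ₂ t ↔ γ₁ 0 = γ₂ 0 := by
  have hc₁ := h₁.continuousOn
  have hc₂ := h₂.continuousOn
  have hsub := eq_mul_exp_integral_of_hasDerivWithinAt
    (f := fun s => γ₁ s - γ₂ s)
    (g := fun s => A s * (γ₁ s ^ 2 + γ₁ s * γ₂ s + γ₂ s ^ 2) + B s * (γ₁ s + γ₂ s))
    (by fun_prop) (fun s hs => ((h₁ s hs).sub (h₂ s hs)).congr_deriv (by ring)) t ht
  rw [← sub_eq_zero, hsub, mul_eq_zero, sub_eq_zero]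
  simp [exp_ne_zero]

theorem IsAbelSolution.hasDerivWithinAt_comp {a b : ℝ} {Φ : ℝ → ℝ} (h : IsAbelSolution A B γ)
    {t : ℝ} (ht : t ∈ Icc (0:ℝ) 1) (hγ : γ t ≠ 0)
    (hΦ : HasDerivAt Φ (γ t ^ 2 * (b * γ t - a))⁻¹ (γ t)) :
    HasDerivWithinAt (Φ ∘ γ) ((A t * γ t + B t) / (b * γ t - a)) (Icc 0 1) t :=
  (hΦ.comp_hasDerivWithinAt t (h t ht)).congr_deriv (by field_simp)

theorem IsPeriodicOrbit.mul_sub_ne_zero {a b : ℝ} (hA : ContinuousOn A (Icc 0 1))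
    (h : IsPeriodicOrbit A B γ) (hγ : ∀ t ∈ Icc (0:ℝ) 1, γ t ≠ 0)
    (hD : ∀ t ∈ Icc (0:ℝ) 1, 0 ≤ a * A t + b * B t)
    (hD' : ¬ ∀ t ∈ Icc (0:ℝ) 1, a * A t + b * B t = 0) :
    ∀ t ∈ Icc (0:ℝ) 1, b * γ t - a ≠ 0 := by
  have hc := h.1.continuousOn
  set R := fun u => ∫ s in (0:ℝ)..u, A s * γ s ^ 2
  set m := fun u => exp (-R u) * (b * γ u - a)
  have hm : ∀ t ∈ Icc (0:ℝ) 1,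
      HasDerivWithinAt m (exp (-R t) * γ t ^ 2 * (a * A t + b * B t)) (Icc 0 1) t :=
    fun t ht => ((hasDerivWithinAt_integral_Icc (by fun_prop) ht).neg.exp.mul
      (((h.1 t ht).const_mul b).sub_const a)).congr_deriv (by simp only [R, Pi.neg_apply]; ring)
  have hρ : ∀ t ∈ Icc (0:ℝ) 1, 0 < exp (-R t) * γ t ^ 2 :=
    fun t ht => mul_pos (exp_pos _) (sq_pos_of_ne_zero (hγ t ht))
  have hmono := monotoneOn_Icc_of_hasDerivWithinAt_nonneg hm
    fun t ht => mul_nonneg (hρ t ht).le (hD t ht)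
  intro t ht hzero
  have hmt : m t = 0 := by simp [m, hzero]
  have h0 : m 0 ≤ 0 := hmt ▸ hmono (left_mem_Icc.2 zero_le_one) ht ht.1
  have h1 : 0 ≤ m 1 := hmt ▸ hmono ht (right_mem_Icc.2 zero_le_one) ht.2
  have hγ0 : b * γ 0 - a = 0 := by
    simp only [m, ← h.2] at h0 h1
    nlinarith [exp_pos (-R 0), exp_pos (-R 1)]
  exact hD' (forall_eq_zero_of_hasDerivWithinAt_pos_mul zero_lt_one hm hρ hD
    (by simp [m, ← h.2, hγ0]))

theorem IsPeriodicOrbit.apply_zero_eq_of_nonneg {a b : ℝ} (hA : ContinuousOn A (Icc 0 1))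
    (hB : ContinuousOn B (Icc 0 1)) (hD : ∀ t ∈ Icc (0:ℝ) 1, 0 ≤ a * A t + b * B t)
    (hD' : ¬ ∀ t ∈ Icc (0:ℝ) 1, a * A t + b * B t = 0)
    (h₁ : IsPeriodicOrbit A B γ₁) (h₂ : IsPeriodicOrbit A B γ₂) (n₁ : γ₁ 0 ≠ 0) (n₂ : γ₂ 0 ≠ 0) :
    γ₁ 0 = γ₂ 0 := by
  by_contra hne
  have hz₁ t (ht : t ∈ Icc (0:ℝ) 1) : γ₁ t ≠ 0 :=
    mt (h₁.1.apply_eq_iff hA hB isAbelSolution_zero ht).1 n₁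
  have hz₂ t (ht : t ∈ Icc (0:ℝ) 1) : γ₂ t ≠ 0 :=
    mt (h₂.1.apply_eq_iff hA hB isAbelSolution_zero ht).1 n₂
  have hδ t (ht : t ∈ Icc (0:ℝ) 1) : γ₁ t ≠ γ₂ t := mt (h₁.1.apply_eq_iff hA hB h₂.1 ht).1 hne
  have hl₁ := h₁.mul_sub_ne_zero hA hz₁ hD hD'
  have hl₂ := h₂.mul_sub_ne_zero hA hz₂ hD hD'
  obtain ⟨Φ, hΦ⟩ := exists_hasDerivAt_inv_sq_mul_sub a b
  have hc₁ := h₁.1.continuousOn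
  have hc₂ := h₂.1.continuousOn
  refine hD' (forall_eq_zero_of_hasDerivWithinAt_mul zero_lt_one (K := Φ ∘ γ₁ - Φ ∘ γ₂)
    (ρ := fun t => (γ₂ t - γ₁ t) / ((b * γ₁ t - a) * (b * γ₂ t - a))) (fun t ht => ?_)
    (by fun_prop (disch := exact fun t ht => mul_ne_zero (hl₁ t ht) (hl₂ t ht)))
    (fun t ht => div_ne_zero (sub_ne_zero.2 (hδ t ht).symm) (mul_ne_zero (hl₁ t ht) (hl₂ t ht)))
    hD (by simp [h₁.2, h₂.2]))
  refine ((h₁.1.hasDerivWithinAt_comp ht (hz₁ t ht) (hΦ _ (hz₁ t ht) (hl₁ t ht))).sub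
    (h₂.1.hasDerivWithinAt_comp ht (hz₂ t ht) (hΦ _ (hz₂ t ht) (hl₂ t ht)))).congr_deriv ?_
  rw [div_sub_div _ _ (hl₁ t ht) (hl₂ t ht), div_mul_eq_mul_div]
  congr 1
  ring

end Abel

theorem abel_at_most_one_nonzero_periodic_orbit
    (A B : ℝ → ℝ)
    (hA : ContinuousOn A (Set.Icc 0 1)) (hB : ContinuousOn B (Set.Icc 0 1))
    (a b : ℝ)
    (h_not_ident_zero : ¬ ∀ t ∈ Set.Icc (0:ℝ) 1, a * A t + b * B t = 0)
    (h_sign : (∀ t ∈ Set.Icc (0:ℝ) 1, 0 ≤ a * A t + b * B t) ∨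
              (∀ t ∈ Set.Icc (0:ℝ) 1, a * A t + b * B t ≤ 0))
    (γ₁ γ₂ : ℝ → ℝ)
    (h₁ : IsPeriodicOrbit A B γ₁) (h₂ : IsPeriodicOrbit A B γ₂)
    (n₁ : γ₁ 0 ≠ 0) (n₂ : γ₂ 0 ≠ 0) :
    Set.EqOn γ₁ γ₂ (Set.Icc 0 1) := by
  have h₀ : γ₁ 0 = γ₂ 0 := by
    rcases h_sign with hD | hD
    · exact h₁.apply_zero_eq_of_nonneg hA hB hD h_not_ident_zero h₂ n₁ n₂
    · refine h₁.apply_zero_eq_of_nonneg (a := -a) (b := -b) hA hB (fun t ht => ?_) (fun h => ?_)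
        h₂ n₁ n₂
      · linarith [hD t ht]
      · exact h_not_ident_zero fun t ht => by linarith [h t ht]
  exact fun t ht => (h₁.1.apply_eq_iff hA hB h₂.1 ht).2 h₀
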